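/- arXiv:1310.7637 — 9 statements merged into one kernel-verified Lean document; each statement's English description precedes it below -/
import Mathlib

section
/- Let X be an n×p matrix, define κ(X) = max{|M| : ∃θ ∈ ℝᵖ with Xθ ≠ 0 and x_iᵀθ = 0 for all i ∈ M ⊆ {1,…,n}}, and let F be a matrix with ker F = ran X. Set ỹ = Fy where y = Xf + e. If ‖e‖₀ ≤ (n - κ(X) - 1)/2, then e is the unique minimizer of ‖s‖₀ subject to Fs = ỹ. -/
open Finset Matrix

noncomputable def l1 {n : ℕ} (v : Fin n → ℝ) : ℝ := ∑ i, |v i|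

noncomputable def l1On {n : ℕ} (M : Finset (Fin n)) (v : Fin n → ℝ) : ℝ := ∑ i ∈ M, |v i|

noncomputable def linfOn {n : ℕ} (M : Finset (Fin n)) (v : Fin n → ℝ) : ℝ :=
  sSup ((fun i => |v i|) '' (M : Set (Fin n)))

open scoped Classical in
noncomputable def l0 {n : ℕ} (v : Fin n → ℝ) : ℕ :=
  (Finset.univ.filter (fun i => v i ≠ 0)).card

/-- The leverage constants `c_k(X)`. -/
noncomputable def cK {n p : ℕ} (X : Matrix (Fin n) (Fin p) ℝ) (k : ℕ) : ℝ :=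
  sInf {r | ∃ M : Finset (Fin n), M.card = k ∧ ∃ g : Fin p → ℝ, g ≠ 0 ∧
    r = (∑ i ∈ Mᶜ, |X.mulVec g i|) / (∑ i, |X.mulVec g i|)}

/-- `m(X) = max {k ∈ {0,…,n} : c_k(X) > 1/2}`. -/
noncomputable def mX {n p : ℕ} (X : Matrix (Fin n) (Fin p) ℝ) : ℕ :=
  sSup {k | k ≤ n ∧ cK X k > 1/2}

noncomputable def psi {n p : ℕ} (X : Matrix (Fin n) (Fin p) ℝ) (σ : ℝ) (y : Fin n → ℝ)
    (g : Fin p → ℝ) (b : Fin n → ℝ) : ℝ :=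
  σ * l1 (y - X.mulVec g - b) + (1/2) * ∑ i, b i ^ 2

noncomputable def softThresh (t ξ : ℝ) : ℝ :=
  if t < ξ then ξ - t else if ξ < -t then ξ + t else 0


/-- `κ(X)`: the largest number of rows of `X` that can be simultaneously orthogonal to
some `θ` with `Xθ ≠ 0`. -/
noncomputable def kappa {n p : ℕ} (X : Matrix (Fin n) (Fin p) ℝ) : ℕ :=
  sSup {k | ∃ θ : Fin p → ℝ, X.mulVec θ ≠ 0 ∧
    ∃ M : Finset (Fin n), M.card = k ∧ ∀ i ∈ M, X.mulVec θ i = 0}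

theorem sparsest_solution_unique {n p q : ℕ} (X : Matrix (Fin n) (Fin p) ℝ)
    (F : Matrix (Fin q) (Fin n) ℝ)
    (hF : LinearMap.ker F.mulVecLin = LinearMap.range X.mulVecLin)
    (f : Fin p → ℝ) (e y : Fin n → ℝ) (hy : y = X.mulVec f + e)
    (he : (l0 e : ℝ) ≤ ((n : ℝ) - kappa X - 1) / 2) :
    F.mulVec e = F.mulVec y ∧
    ∀ s : Fin n → ℝ, F.mulVec s = F.mulVec y → s ≠ e → l0 e < l0 s := by

  classical
  have hFe : F.mulVec e = F.mulVec y := by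
    have hmem : X.mulVec f ∈ LinearMap.ker F.mulVecLin := by
      rw [hF]; exact ⟨f, rfl⟩
    have h0 : F.mulVec (X.mulVec f) = 0 := hmem
    rw [hy]
    rw [Matrix.mulVec_add, h0, zero_add]
  refine ⟨hFe, ?_⟩
  intro s hFs hne
  -- s - e ∈ ker F = range X
  have hker : s - e ∈ LinearMap.ker F.mulVecLin := by
    show F.mulVec (s - e) = 0
    rw [Matrix.mulVec_sub, hFs, hFe, sub_self]
  rw [hF] at hker
  obtain ⟨θ, hθ⟩ := hker
  have hθe : X.mulVec θ = s - e := hθ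
  have hθ0 : X.mulVec θ ≠ 0 := by
    rw [hθe]; intro h; exact hne (sub_eq_zero.mp h)
  -- the zero set of Xθ
  set Z : Finset (Fin n) := Finset.univ.filter (fun i => X.mulVec θ i = 0) with hZdef
  have hZmem : Z.card ∈ {k | ∃ θ : Fin p → ℝ, X.mulVec θ ≠ 0 ∧
      ∃ M : Finset (Fin n), M.card = k ∧ ∀ i ∈ M, X.mulVec θ i = 0} :=
    ⟨θ, hθ0, Z, rfl, fun i hi => (Finset.mem_filter.mp hi).2⟩
  have hbdd : BddAbove {k | ∃ θ : Fin p → ℝ, X.mulVec θ ≠ 0 ∧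
      ∃ M : Finset (Fin n), M.card = k ∧ ∀ i ∈ M, X.mulVec θ i = 0} := by
    refine ⟨n, ?_⟩
    rintro k ⟨θ', -, M, hM, -⟩
    exact hM ▸ Finset.card_le_card (Finset.subset_univ M) |>.trans (by simp)
  have hZκ : Z.card ≤ kappa X := le_csSup hbdd hZmem
  -- counting
  set A : Finset (Fin n) := Finset.univ.filter (fun i => X.mulVec θ i ≠ 0) with hAdef
  set E : Finset (Fin n) := Finset.univ.filter (fun i => e i ≠ 0) with hEdef
  have hAZ : A.card + Z.card = n := by
    have := Finset.card_filter_add_card_filter_not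
      (s := (Finset.univ : Finset (Fin n))) (p := fun i => X.mulVec θ i ≠ 0)
    simpa [hAdef, hZdef] using this
  have hsub : A \ E ⊆ Finset.univ.filter (fun i => s i ≠ 0) := by
    intro i hi
    rw [Finset.mem_sdiff] at hi
    obtain ⟨hiA, hiE⟩ := hi
    have hXi : X.mulVec θ i ≠ 0 := (Finset.mem_filter.mp hiA).2
    have hei : e i = 0 := by
      by_contra h
      exact hiE (Finset.mem_filter.mpr ⟨Finset.mem_univ i, h⟩)
    have hsi : s i ≠ 0 := by
      have : X.mulVec θ i = s i - e i := by rw [hθe]; rfl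
      rw [hei, sub_zero] at this
      rwa [this] at hXi
    exact Finset.mem_filter.mpr ⟨Finset.mem_univ i, hsi⟩
  have hcard1 : A.card - E.card ≤ (A \ E).card := Finset.le_card_sdiff E A
  have hls : A.card - E.card ≤ l0 s := by
    refine hcard1.trans ?_
    exact Finset.card_le_card hsub
  have hle : l0 e = E.card := rfl
  -- arithmetic: from he, 2 * l0 e + kappa X + 1 ≤ n
  have hκn : 2 * (l0 e) + kappa X + 1 ≤ n := by
    have : (2 * (l0 e) + kappa X + 1 : ℝ) ≤ n := by
      have h2 : (l0 e : ℝ) * 2 ≤ (n : ℝ) - kappa X - 1 := by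
        rw [← le_div_iff₀ (by norm_num : (0:ℝ) < 2)] at *
        linarith [he]
      linarith
    exact_mod_cast this
  omega
end

section
/- Let X be an n×p real matrix with rows x_i, let M ⊆ N with |M| = k where 2c_k(X) > 1, and let y, b* ∈ ℝⁿ and g, g* ∈ ℝᵖ be arbitrary. Then ‖y - Xg - b*‖₁ - ‖y - Xg* - b*‖₁ ≥ (2c_k - 1)‖X(g - g*)‖₁ - 2 Σ_{i∈N∖M} |y_i - x_iᵀg* - b*_i|. -/
open Finset Matrix

theorem l1_fundamental_inequality {n p : ℕ} (X : Matrix (Fin n) (Fin p) ℝ) (k : ℕ)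
    (M : Finset (Fin n)) (hM : M.card = k) (hck : 1 < 2 * cK X k)
    (y bstar : Fin n → ℝ) (g gstar : Fin p → ℝ) :
    l1 (y - X.mulVec g - bstar) - l1 (y - X.mulVec gstar - bstar) ≥
      (2 * cK X k - 1) * l1 (X.mulVec (g - gstar)) -
        2 * ∑ i ∈ Mᶜ, |y i - X.mulVec gstar i - bstar i| := by
  classical
  set c := cK X k with hc
  set d := X.mulVec (g - gstar) with hd
  set r := y - X.mulVec gstar - bstar with hr
  have key : y - X.mulVec g - bstar = r - d := by
    ext i
    simp [hr, hd, Matrix.mulVec_sub, Pi.sub_apply]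
    ring
  set s := ∑ i, |d i| with hs
  set sM := ∑ i ∈ Mᶜ, |d i| with hsM
  have hsplit : ∑ i ∈ M, |d i| + sM = s := Finset.sum_add_sum_compl M _
  have hsM_nonneg : 0 ≤ sM := Finset.sum_nonneg fun i _ => abs_nonneg _
  have hM_nonneg : 0 ≤ ∑ i ∈ M, |d i| := Finset.sum_nonneg fun i _ => abs_nonneg _
  -- key leverage bound: c * s ≤ sM
  have hcs : c * s ≤ sM := by
    rcases eq_or_lt_of_le (Finset.sum_nonneg fun i (_ : i ∈ Finset.univ) => abs_nonneg (d i)) with h0 | hpos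
    · have hs0 : s = 0 := h0.symm
      have hsM0 : sM = 0 := le_antisymm (by
        rw [← hsplit] at hs0; linarith) hsM_nonneg
      simp [hs0, hsM0]
    · have hgne : g - gstar ≠ 0 := by
        intro h
        have hd0 : d = 0 := by rw [hd, h, Matrix.mulVec_zero]
        have hs0 : s = 0 := by simp [hs, hd0]
        linarith
      have hmem : sM / s ∈ {r | ∃ M : Finset (Fin n), M.card = k ∧ ∃ g : Fin p → ℝ, g ≠ 0 ∧
          r = (∑ i ∈ Mᶜ, |X.mulVec g i|) / (∑ i, |X.mulVec g i|)} :=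
        ⟨M, hM, g - gstar, hgne, rfl⟩
      have hbdd : BddBelow {r | ∃ M : Finset (Fin n), M.card = k ∧ ∃ g : Fin p → ℝ, g ≠ 0 ∧
          r = (∑ i ∈ Mᶜ, |X.mulVec g i|) / (∑ i, |X.mulVec g i|)} := by
        refine ⟨0, ?_⟩
        rintro x ⟨M', _, g', _, rfl⟩
        exact div_nonneg (Finset.sum_nonneg fun i _ => abs_nonneg _)
          (Finset.sum_nonneg fun i _ => abs_nonneg _)
      have hle : c ≤ sM / s := csInf_le hbdd hmem
      calc c * s ≤ sM / s * s := by nlinarith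
        _ = sM := div_mul_cancel₀ _ (ne_of_gt hpos)
  -- pointwise bounds
  have hMbound : ∀ i ∈ M, -|d i| ≤ |r i - d i| - |r i| := by
    intro i _
    have := abs_sub_abs_le_abs_sub (r i) (r i - d i)
    have h2 : |r i - (r i - d i)| = |d i| := by ring_nf
    nlinarith [abs_sub_abs_le_abs_sub (r i) (r i - d i), abs_sub_comm (r i) (r i - d i)]
  have hMcbound : ∀ i ∈ Mᶜ, |d i| - 2 * |r i| ≤ |r i - d i| - |r i| := by
    intro i _
    have h1 : |d i| - |r i| ≤ |r i - d i| := by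
      have := abs_sub_abs_le_abs_sub (d i) (r i)
      have : |d i - r i| = |r i - d i| := abs_sub_comm _ _
      nlinarith [abs_sub_abs_le_abs_sub (d i) (r i), abs_sub_comm (d i) (r i)]
    linarith
  have hsum : l1 (r - d) - l1 r ≥ 2 * sM - s - 2 * ∑ i ∈ Mᶜ, |r i| := by
    have e1 : l1 (r - d) = ∑ i ∈ M, |r i - d i| + ∑ i ∈ Mᶜ, |r i - d i| := by
      rw [l1]
      rw [← Finset.sum_add_sum_compl M]
      simp [Pi.sub_apply]
    have e2 : l1 r = ∑ i ∈ M, |r i| + ∑ i ∈ Mᶜ, |r i| := by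
      rw [l1, ← Finset.sum_add_sum_compl M]
    have b1 : ∑ i ∈ M, |r i - d i| ≥ ∑ i ∈ M, |r i| - ∑ i ∈ M, |d i| := by
      rw [← Finset.sum_sub_distrib]
      apply Finset.sum_le_sum
      intro i hi
      have := hMbound i hi
      linarith
    have b2 : ∑ i ∈ Mᶜ, |r i - d i| ≥ ∑ i ∈ Mᶜ, |d i| - ∑ i ∈ Mᶜ, |r i| := by
      rw [← Finset.sum_sub_distrib]
      apply Finset.sum_le_sum
      intro i hi
      have := hMcbound i hi
      linarith
    rw [e1, e2]
    have : ∑ i ∈ M, |d i| = s - sM := by linarith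
    linarith
  have hrfl : (∑ i ∈ Mᶜ, |y i - X.mulVec gstar i - bstar i|) = ∑ i ∈ Mᶜ, |r i| := by
    apply Finset.sum_congr rfl
    intro i _
    simp [hr, Pi.sub_apply]
  rw [key, hrfl]
  have hls : l1 d = s := rfl
  have : (2 * c - 1) * l1 d ≤ 2 * sM - s := by
    rw [hls]
    nlinarith
  linarith
end

section
/- Let y = Xf + z + e with M = supp(e), |M| = k ≤ m(X), and decompose z = Xḡ + b̄ with b̄ ∈ ker Xᵀ. Let f_n = f + ḡ and let f₁ be any minimizer of g ↦ ‖y - Xg‖₁. If b̄_i = 0 for all i ∉ M, then f₁ = f_n. -/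
open Finset Matrix

/-- The defining set of `cK` is bounded below by `0`. -/
lemma cK_set_bddBelow {n p : ℕ} (X : Matrix (Fin n) (Fin p) ℝ) (k : ℕ) :
    BddBelow {r | ∃ M : Finset (Fin n), M.card = k ∧ ∃ g : Fin p → ℝ, g ≠ 0 ∧
      r = (∑ i ∈ Mᶜ, |X.mulVec g i|) / (∑ i, |X.mulVec g i|)} := by
  refine ⟨0, ?_⟩
  rintro r ⟨M, hM, g, hg, rfl⟩
  exact div_nonneg (Finset.sum_nonneg fun i _ => abs_nonneg _)
    (Finset.sum_nonneg fun i _ => abs_nonneg _)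

/-- Key sum inequality: if `w` is supported on `M` and the mass of `v` outside `M`
exceeds half of its total mass, then `l1 w < l1 (v + w)`. -/
lemma key_sum_lt {n : ℕ} (M : Finset (Fin n)) (w v : Fin n → ℝ)
    (hw : ∀ i ∉ M, w i = 0)
    (hgt : (1/2) * (∑ i, |v i|) < ∑ i ∈ Mᶜ, |v i|) :
    l1 w < l1 (v + w) := by
  have hsplitv : ∑ i ∈ Mᶜ, |v i| + ∑ i ∈ M, |v i| = ∑ i, |v i| :=
    Finset.sum_compl_add_sum M (fun i => |v i|)
  have hlw : l1 w = ∑ i ∈ M, |w i| := by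
    rw [l1, ← Finset.sum_compl_add_sum M (fun i => |w i|)]
    have : ∑ i ∈ Mᶜ, |w i| = 0 := by
      apply Finset.sum_eq_zero
      intro i hi
      rw [hw i (Finset.mem_compl.mp hi), abs_zero]
    rw [this, zero_add]
  have hlvw : l1 (v + w) = ∑ i ∈ Mᶜ, |v i| + ∑ i ∈ M, |v i + w i| := by
    rw [l1, ← Finset.sum_compl_add_sum M (fun i => |(v + w) i|)]
    congr 1
    · apply Finset.sum_congr rfl
      intro i hi
      rw [Pi.add_apply, hw i (Finset.mem_compl.mp hi), add_zero]
  have hM1 : ∑ i ∈ M, |w i| - ∑ i ∈ M, |v i| ≤ ∑ i ∈ M, |v i + w i| := by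
    rw [← Finset.sum_sub_distrib]
    apply Finset.sum_le_sum
    intro i _
    have := abs_sub_abs_le_abs_sub (w i) (-(v i))
    simp only [abs_neg, sub_neg_eq_add] at this
    calc |w i| - |v i| ≤ |w i + v i| := this
      _ = |v i + w i| := by rw [add_comm]
  have hlt : ∑ i ∈ M, |v i| < ∑ i ∈ Mᶜ, |v i| := by linarith
  rw [hlw, hlvw]
  linarith

theorem l1_exact_recovery_noise_in_range {n p : ℕ} (X : Matrix (Fin n) (Fin p) ℝ)
    (hX : X.rank = p) (f gbar : Fin p → ℝ) (z e bbar y : Fin n → ℝ)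
    (hy : y = X.mulVec f + z + e)
    (M : Finset (Fin n)) (hM : ∀ i, i ∈ M ↔ e i ≠ 0)
    (k : ℕ) (hk : M.card = k) (hkm : k ≤ mX X)
    (hz : z = X.mulVec gbar + bbar) (hb : Xᵀ.mulVec bbar = 0)
    (f1 : Fin p → ℝ) (hf1 : ∀ g : Fin p → ℝ, l1 (y - X.mulVec f1) ≤ l1 (y - X.mulVec g))
    (hbz : ∀ i ∉ M, bbar i = 0) :
    f1 = f + gbar := by
  classical
  -- injectivity of mulVec from full column rank
  have hinj : Function.Injective X.mulVec := by
    have h1 : Module.finrank ℝ (LinearMap.range X.mulVecLin)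
        + Module.finrank ℝ (LinearMap.ker X.mulVecLin)
        = Module.finrank ℝ (Fin p → ℝ) := LinearMap.finrank_range_add_finrank_ker _
    have hdom : Module.finrank ℝ (Fin p → ℝ) = p := by simp
    have hrk : X.rank = Module.finrank ℝ (LinearMap.range X.mulVecLin) := rfl
    have hker : Module.finrank ℝ (LinearMap.ker X.mulVecLin) = 0 := by omega
    have hbot : LinearMap.ker X.mulVecLin = ⊥ := Submodule.finrank_eq_zero.mp hker
    have := LinearMap.ker_eq_bot.mp hbot
    intro a b hab
    exact this (by simpa [Matrix.mulVecLin_apply] using hab)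
  set h : Fin p → ℝ := f + gbar - f1 with hh
  set w : Fin n → ℝ := e + bbar with hwdef
  have hwM : ∀ i ∉ M, w i = 0 := by
    intro i hi
    have he : e i = 0 := by
      by_contra hne
      exact hi ((hM i).mpr hne)
    simp [hwdef, he, hbz i hi]
  have hy1 : y - X.mulVec f1 = X.mulVec h + w := by
    funext i
    simp only [hy, hz, hh, hwdef, Matrix.mulVec_sub, Matrix.mulVec_add, Pi.add_apply,
      Pi.sub_apply]
    ring
  have hy2 : y - X.mulVec (f + gbar) = w := by
    funext i
    simp only [hy, hz, hwdef, Matrix.mulVec_add, Pi.add_apply, Pi.sub_apply]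
    ring
  -- it suffices to show X.mulVec h = 0
  suffices hXh : X.mulVec h = 0 by
    have h0 : h = 0 := by
      apply hinj
      rw [hXh]
      simp [Matrix.mulVec_zero]
    have := sub_eq_zero.mp h0
    exact this.symm
  by_contra hXh
  have hmin : l1 (X.mulVec h + w) ≤ l1 w := by
    rw [← hy1, ← hy2]
    exact hf1 (f + gbar)
  set v : Fin n → ℝ := X.mulVec h with hv
  have hvpos : 0 < ∑ i, |v i| := by
    have hne : ∃ i, v i ≠ 0 := by
      by_contra hc
      push_neg at hc
      exact hXh (funext hc)
    obtain ⟨i, hi⟩ := hne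
    apply Finset.sum_pos' (fun j _ => abs_nonneg _)
    exact ⟨i, Finset.mem_univ i, abs_pos.mpr hi⟩
  -- Show the mass outside M exceeds half the total mass
  have hgt : (1/2) * (∑ i, |v i|) < ∑ i ∈ Mᶜ, |v i| := by
    by_cases hT : {j | j ≤ n ∧ cK X j > 1/2}.Nonempty
    · -- mX X is in the set, extend M to a set of size mX X
      have hmem : mX X ∈ {j | j ≤ n ∧ cK X j > 1/2} := by
        apply Nat.sSup_mem hT
        exact ⟨n, fun j hj => hj.1⟩
      obtain ⟨hmn, hmc⟩ := hmem
      have hMcard : M.card ≤ mX X := hk ▸ hkm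
      obtain ⟨M', hMM', _, hM'card⟩ :=
        Finset.exists_subsuperset_card_eq (Finset.subset_univ M) hMcard
          (by simpa using hmn)
      have hhne : h ≠ 0 := by
        intro hc
        apply hXh
        rw [hv, hc]
        exact Matrix.mulVec_zero X
      have hratio : (∑ i ∈ M'ᶜ, |v i|) / (∑ i, |v i|) ∈
          {r | ∃ N : Finset (Fin n), N.card = mX X ∧ ∃ g : Fin p → ℝ, g ≠ 0 ∧
            r = (∑ i ∈ Nᶜ, |X.mulVec g i|) / (∑ i, |X.mulVec g i|)} :=
        ⟨M', hM'card, h, hhne, rfl⟩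
      have hle : cK X (mX X) ≤ (∑ i ∈ M'ᶜ, |v i|) / (∑ i, |v i|) :=
        csInf_le (cK_set_bddBelow X (mX X)) hratio
      have hgt' : (1:ℝ)/2 < (∑ i ∈ M'ᶜ, |v i|) / (∑ i, |v i|) := lt_of_lt_of_le hmc hle
      have h1 : (1/2) * (∑ i, |v i|) < ∑ i ∈ M'ᶜ, |v i| := by
        rw [div_lt_div_iff₀ (by norm_num) hvpos] at hgt'
        linarith
      have h2 : ∑ i ∈ M'ᶜ, |v i| ≤ ∑ i ∈ Mᶜ, |v i| :=
        Finset.sum_le_sum_of_subset_of_nonneg (Finset.compl_subset_compl.mpr hMM')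
          (fun i _ _ => abs_nonneg _)
      linarith
    · -- the set is empty, so mX X = 0, hence k = 0 and M = ∅, w = 0
      have hmx : mX X = 0 := by
        rw [mX, Set.not_nonempty_iff_eq_empty.mp hT]
        exact csSup_empty
      have hk0 : k = 0 := by omega
      have hMe : M = ∅ := Finset.card_eq_zero.mp (hk.trans hk0)
      have hw0 : w = 0 := by
        funext i
        exact hwM i (by simp [hMe])
      have hl1w : l1 w = 0 := by
        rw [hw0]
        simp [l1]
      have : l1 (v + w) ≤ 0 := le_of_le_of_eq hmin hl1w
      have : l1 (v + w) = ∑ i, |v i| := by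
        rw [hw0]
        simp [l1]
      linarith [le_of_le_of_eq hmin hl1w, this ▸ hvpos]
  exact absurd hmin (not_le.mpr (key_sum_lt M w v hwM hgt))
end

section
/- Let X be an n×p full-rank matrix and k ≤ m(X). Then for every f ∈ ℝᵖ and every e ∈ ℝⁿ with ‖e‖₀ ≤ k, f is the unique minimizer of g ↦ ‖Xf + e - Xg‖₁ over ℝᵖ. -/
open Finset Matrix

lemma mulVec_inj {n p : ℕ} (X : Matrix (Fin n) (Fin p) ℝ) (hX : X.rank = p) :
    Function.Injective X.mulVec := by
  have h1 : Module.finrank ℝ (LinearMap.range X.mulVecLin)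
      + Module.finrank ℝ (LinearMap.ker X.mulVecLin)
      = Module.finrank ℝ (Fin p → ℝ) := LinearMap.finrank_range_add_finrank_ker _
  rw [show Module.finrank ℝ (LinearMap.range X.mulVecLin) = X.rank from rfl, hX] at h1
  simp only [Module.finrank_fintype_fun_eq_card, Fintype.card_fin] at h1
  have hker : LinearMap.ker X.mulVecLin = ⊥ :=
    Submodule.finrank_eq_zero.mp (by omega)
  have := LinearMap.ker_eq_bot.mp hker
  intro a b hab
  exact this (by simpa using hab)

open scoped Classical in
lemma key {n p : ℕ} (X : Matrix (Fin n) (Fin p) ℝ) (hX : X.rank = p)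
    (k : ℕ) (hk : k ≤ mX X) (e : Fin n → ℝ) (he : l0 e ≤ k)
    (h : Fin p → ℝ) (hh : h ≠ 0) : l1 e < l1 (e - X.mulVec h) := by
  classical
  have hinj := mulVec_inj X hX
  set u := X.mulVec h with hu
  have hune : u ≠ 0 := by
    intro h0
    exact hh (hinj (by rw [← hu, h0]; simp [Matrix.mulVec_zero]))
  set S : Finset (Fin n) := Finset.univ.filter (fun i => e i ≠ 0) with hS
  have hScard : S.card ≤ k := he
  -- key strict inequality
  have hmain : ∑ i ∈ S, |u i| < ∑ i ∈ Sᶜ, |u i| := by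
    by_cases hSe : S = ∅
    · rw [hSe]
      simp only [Finset.sum_empty, Finset.compl_empty]
      obtain ⟨i, hi⟩ := Function.ne_iff.mp hune
      exact Finset.sum_pos' (fun i _ => abs_nonneg _)
        ⟨i, Finset.mem_univ i, abs_pos.mpr hi⟩
    · -- S nonempty, so k ≥ 1, so mX X set nonempty
      have hS1 : 1 ≤ S.card := Finset.card_pos.mpr (Finset.nonempty_iff_ne_empty.mpr hSe)
      have hm1 : 1 ≤ mX X := le_trans (le_trans hS1 hScard) hk
      set T : Set ℕ := {k | k ≤ n ∧ cK X k > 1/2} with hT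
      have hTne : T.Nonempty := by
        by_contra hc
        rw [Set.not_nonempty_iff_eq_empty] at hc
        rw [mX, ← hT, hc, csSup_empty] at hm1
        simp at hm1
      have hTbdd : BddAbove T := ⟨n, fun x hx => hx.1⟩
      have hmem : mX X ∈ T := Nat.sSup_mem hTne hTbdd
      obtain ⟨hmn, hcK⟩ := hmem
      -- pad S to a set of card mX X
      obtain ⟨M, hSM, _, hMcard⟩ := Finset.exists_subsuperset_card_eq
        (Finset.subset_univ S) (le_trans hScard hk)
        (by simpa using hmn)
      have hD : (0:ℝ) < ∑ i, |u i| := by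
        obtain ⟨i, hi⟩ := Function.ne_iff.mp hune
        exact Finset.sum_pos' (fun i _ => abs_nonneg _)
          ⟨i, Finset.mem_univ i, abs_pos.mpr hi⟩
      have hratio : cK X (mX X) ≤ (∑ i ∈ Mᶜ, |u i|) / (∑ i, |u i|) := by
        apply csInf_le
        · refine ⟨0, fun r hr => ?_⟩
          obtain ⟨M', _, g, _, rfl⟩ := hr
          positivity
        · exact ⟨M, hMcard, h, hh, rfl⟩
      have hgt : (1:ℝ)/2 < (∑ i ∈ Mᶜ, |u i|) / (∑ i, |u i|) := lt_of_lt_of_le hcK hratio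
      have hsplit : (∑ i ∈ M, |u i|) + ∑ i ∈ Mᶜ, |u i| = ∑ i, |u i| :=
        Finset.sum_add_sum_compl M _
      have hMc : (∑ i, |u i|) / 2 < ∑ i ∈ Mᶜ, |u i| := by
        rw [lt_div_iff₀ hD] at hgt
        linarith [hgt]
      have h2 : ∑ i ∈ M, |u i| < ∑ i ∈ Mᶜ, |u i| := by linarith
      calc ∑ i ∈ S, |u i| ≤ ∑ i ∈ M, |u i| :=
            Finset.sum_le_sum_of_subset_of_nonneg hSM (fun i _ _ => abs_nonneg _)
        _ < ∑ i ∈ Mᶜ, |u i| := h2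
        _ ≤ ∑ i ∈ Sᶜ, |u i| :=
            Finset.sum_le_sum_of_subset_of_nonneg (Finset.compl_subset_compl.mpr hSM)
              (fun i _ _ => abs_nonneg _)
  -- now conclude
  have he0 : ∀ i ∈ Sᶜ, e i = 0 := by
    intro i hi
    simp only [hS, Finset.mem_compl, Finset.mem_filter, Finset.mem_univ, true_and,
      not_not] at hi
    exact hi
  have hl1e : l1 e = ∑ i ∈ S, |e i| := by
    rw [l1, ← Finset.sum_add_sum_compl S]
    have hz : ∑ i ∈ Sᶜ, |e i| = 0 :=
      Finset.sum_eq_zero (fun i hi => by rw [he0 i hi, abs_zero])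
    rw [hz, add_zero]
  have hl1eu : l1 (e - u) = (∑ i ∈ S, |e i - u i|) + ∑ i ∈ Sᶜ, |u i| := by
    rw [l1, ← Finset.sum_add_sum_compl S]
    have h2 : ∑ i ∈ Sᶜ, |(e - u) i| = ∑ i ∈ Sᶜ, |u i| :=
      Finset.sum_congr rfl (fun i hi => by
        rw [Pi.sub_apply, he0 i hi, zero_sub, abs_neg])
    rw [h2]
    simp [Pi.sub_apply]
  rw [hl1e, hl1eu]
  have hterm : ∀ i ∈ S, |e i| - |u i| ≤ |e i - u i| :=
    fun i _ => abs_sub_abs_le_abs_sub _ _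
  have : ∑ i ∈ S, (|e i| - |u i|) ≤ ∑ i ∈ S, |e i - u i| :=
    Finset.sum_le_sum hterm
  rw [Finset.sum_sub_distrib] at this
  linarith

theorem l1_exact_recovery_sparse {n p : ℕ} (X : Matrix (Fin n) (Fin p) ℝ)
    (hX : X.rank = p) (k : ℕ) (hk : k ≤ mX X) (f : Fin p → ℝ) (e : Fin n → ℝ)
    (he : l0 e ≤ k) :
    (∀ g : Fin p → ℝ,
      l1 (X.mulVec f + e - X.mulVec f) ≤ l1 (X.mulVec f + e - X.mulVec g)) ∧
    (∀ g : Fin p → ℝ,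
      l1 (X.mulVec f + e - X.mulVec g) ≤ l1 (X.mulVec f + e - X.mulVec f) → g = f) := by
  have hbase : X.mulVec f + e - X.mulVec f = e := by abel
  have hexp : ∀ g : Fin p → ℝ, X.mulVec f + e - X.mulVec g = e - X.mulVec (g - f) := by
    intro g
    rw [Matrix.mulVec_sub]
    abel
  constructor
  · intro g
    rw [hbase, hexp g]
    by_cases hg : g = f
    · subst hg; simp
    · exact le_of_lt (key X hX k hk e he (g - f) (sub_ne_zero.mpr hg))
  · intro g hle
    by_contra hg
    rw [hbase, hexp g] at hle
    exact absurd hle (not_le.mpr (key X hX k hk e he (g - f) (sub_ne_zero.mpr hg)))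
end

section
/- Let X be an n×p full-rank matrix and k > m(X). Then for every f ∈ ℝᵖ and every α > 0 there exists e ∈ ℝⁿ with ‖e‖₀ ≤ k and a vector g_k ∈ ℝᵖ with ‖g_k‖₂ = 1 such that ‖(Xf + e) - X(f + α g_k)‖₁ ≤ ‖(Xf + e) - Xf‖₁; i.e., f is not the unique minimizer of g ↦ ‖Xf + e - Xg‖₁. -/
open Finset Matrix

/-
Since `m(X) < k`, the leverage constant `c_k(X)` is at most `1/2`. The ratio defining `c_k(X)` is
invariant under scaling `g`, and for `X` of full column rank it is continuous on the unit sphere,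
so by compactness this infimum is attained at some `|M| = k` and `g ≠ 0`, giving
`∑_{i ∉ M} |(Xg)_i| ≤ ∑_{i ∈ M} |(Xg)_i|`. Normalising `g` to `g_k` and placing the gross error
`e = α X g_k` on `M`, the perturbed fit `f + α g_k` leaves the residual `-α X g_k` on `Mᶜ` only,
which costs no more in `ℓ¹` than the residual `e` of `f`.
-/

lemma Matrix.mulVec_injective_of_rank_eq {K m n : Type*} [Field K] [Fintype m] [Fintype n]
    {X : Matrix m n K} (hX : X.rank = Fintype.card n) : Function.Injective X.mulVec := by
  have hrange : Module.finrank K (LinearMap.range X.mulVecLin) = Fintype.card n := hX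
  have hsum := LinearMap.finrank_range_add_finrank_ker X.mulVecLin
  rw [hrange, Module.finrank_fintype_fun_eq_card] at hsum
  exact LinearMap.ker_eq_bot.mp <| Submodule.finrank_eq_zero.mp
    (show Module.finrank K (LinearMap.ker X.mulVecLin) = 0 by omega)

section Leverage

variable {n p : ℕ} (X : Matrix (Fin n) (Fin p) ℝ)

noncomputable def leverageRatio (M : Finset (Fin n)) (g : Fin p → ℝ) : ℝ :=
  (∑ i ∈ Mᶜ, |X.mulVec g i|) / (∑ i, |X.mulVec g i|)

lemma sum_abs_mulVec_smul (s : Finset (Fin n)) (c : ℝ) (g : Fin p → ℝ) :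
    ∑ i ∈ s, |X.mulVec (c • g) i| = |c| * ∑ i ∈ s, |X.mulVec g i| := by
  simp only [Matrix.mulVec_smul, Pi.smul_apply, smul_eq_mul, abs_mul, Finset.mul_sum]

lemma leverageRatio_smul (M : Finset (Fin n)) {c : ℝ} (hc : c ≠ 0) (g : Fin p → ℝ) :
    leverageRatio X M (c • g) = leverageRatio X M g := by
  simp only [leverageRatio, sum_abs_mulVec_smul]
  exact mul_div_mul_left _ _ (abs_ne_zero.mpr hc)

variable {X}

lemma sum_abs_mulVec_pos (hX : Function.Injective X.mulVec) {g : Fin p → ℝ} (hg : g ≠ 0) :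
    0 < ∑ i, |X.mulVec g i| := by
  obtain ⟨i, hi⟩ := Function.ne_iff.mp (hX.ne hg |>.trans_eq (Matrix.mulVec_zero X))
  exact (abs_pos.mpr hi).trans_le
    (Finset.single_le_sum (fun j _ => abs_nonneg (X.mulVec g j)) (mem_univ i))

lemma continuousOn_leverageRatio (hX : Function.Injective X.mulVec) (M : Finset (Fin n)) :
    ContinuousOn (leverageRatio X M) {g | g ≠ 0} := by
  have hcont : ∀ s : Finset (Fin n), Continuous fun g : Fin p → ℝ => ∑ i ∈ s, |X.mulVec g i| :=
    fun s => by fun_prop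
  exact (hcont Mᶜ).continuousOn.div (hcont univ).continuousOn
    fun g hg => (sum_abs_mulVec_pos hX hg).ne'

lemma cK_eq_sInf_biUnion_image_sphere (k : ℕ) :
    cK X k = sInf (⋃ M ∈ {M : Finset (Fin n) | M.card = k},
      leverageRatio X M '' Metric.sphere (0 : Fin p → ℝ) 1) := by
  refine congrArg sInf (Set.ext fun r => ?_)
  simp only [Set.mem_iUnion, Set.mem_image, Set.mem_ofPred_eq]
  constructor
  · rintro ⟨M, hM, g, hg, rfl⟩
    have hnorm : ‖g‖ ≠ 0 := norm_ne_zero_iff.mpr hg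
    refine ⟨M, hM, ‖g‖⁻¹ • g, ?_, leverageRatio_smul X M (inv_ne_zero hnorm) g⟩
    rw [mem_sphere_zero_iff_norm, norm_smul, norm_inv, norm_norm, inv_mul_cancel₀ hnorm]
  · rintro ⟨M, hM, g, hg, rfl⟩
    exact ⟨M, hM, g, ne_zero_of_mem_unit_sphere ⟨g, hg⟩, rfl⟩

lemma exists_leverageRatio_eq_cK (hX : Function.Injective X.mulVec) (hp : 0 < p) {k : ℕ}
    (hkn : k ≤ n) :
    ∃ M : Finset (Fin n), M.card = k ∧ ∃ g : Fin p → ℝ, g ≠ 0 ∧ leverageRatio X M g = cK X k := by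
  set S := ⋃ M ∈ {M : Finset (Fin n) | M.card = k},
    leverageRatio X M '' Metric.sphere (0 : Fin p → ℝ) 1
  have hcompact : IsCompact S :=
    (Set.toFinite _).isCompact_biUnion fun M _ => (isCompact_sphere 0 1).image_of_continuousOn
      ((continuousOn_leverageRatio hX M).mono fun g hg => ne_zero_of_mem_unit_sphere ⟨g, hg⟩)
  have hne : S.Nonempty := by
    have : Nonempty (Fin p) := ⟨⟨0, hp⟩⟩
    obtain ⟨M, -, hM⟩ := Finset.exists_subset_card_eq (s := (univ : Finset (Fin n)))
      (by simpa using hkn)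
    obtain ⟨g, hg⟩ := (NormedSpace.sphere_nonempty (x := (0 : Fin p → ℝ))).mpr zero_le_one
    exact ⟨_, Set.mem_biUnion (x := M) hM (Set.mem_image_of_mem _ hg)⟩
  obtain ⟨M, hM, g, hg, h⟩ := by
    simpa only [S, Set.mem_iUnion, Set.mem_image, Set.mem_ofPred_eq] using hcompact.sInf_mem hne
  exact ⟨M, hM, g, ne_zero_of_mem_unit_sphere ⟨g, hg⟩,
    h.trans (cK_eq_sInf_biUnion_image_sphere k).symm⟩

lemma cK_le_half_of_mX_lt {k : ℕ} (hk : mX X < k) (hkn : k ≤ n) : cK X k ≤ 1 / 2 := by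
  by_contra! h
  exact hk.not_ge (le_csSup ⟨n, fun _ hj => hj.1⟩ ⟨hkn, h⟩)

lemma sum_compl_le_sum_of_leverageRatio_le_half (hX : Function.Injective X.mulVec)
    {M : Finset (Fin n)} {g : Fin p → ℝ} (hg : g ≠ 0) (h : leverageRatio X M g ≤ 1 / 2) :
    ∑ i ∈ Mᶜ, |X.mulVec g i| ≤ ∑ i ∈ M, |X.mulVec g i| := by
  rw [leverageRatio, div_le_iff₀ (sum_abs_mulVec_pos hX hg), ← sum_add_sum_compl M] at h
  linarith

lemma exists_sum_compl_le_sum_of_mX_lt (hX : Function.Injective X.mulVec) (hp : 0 < p) {k : ℕ}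
    (hk : mX X < k) (hkn : k ≤ n) :
    ∃ M : Finset (Fin n), M.card = k ∧ ∃ g : Fin p → ℝ, g ≠ 0 ∧
      ∑ i ∈ Mᶜ, |X.mulVec g i| ≤ ∑ i ∈ M, |X.mulVec g i| := by
  obtain ⟨M, hM, g, hg, hratio⟩ := exists_leverageRatio_eq_cK hX hp hkn
  exact ⟨M, hM, g, hg, sum_compl_le_sum_of_leverageRatio_le_half hX hg
    (hratio.trans_le (cK_le_half_of_mX_lt hk hkn))⟩

end Leverage

lemma sqrt_sum_sq_inv_smul_eq_one {p : ℕ} {g : Fin p → ℝ} (hg : g ≠ 0) :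
    √(∑ j, ((√(∑ j, g j ^ 2))⁻¹ • g) j ^ 2) = 1 := by
  have hnorm : ∀ x : Fin p → ℝ, ‖WithLp.toLp 2 x‖ = √(∑ j, x j ^ 2) := fun x => by
    simp only [EuclideanSpace.norm_eq, Real.norm_eq_abs, sq_abs]
  have h := norm_smul_inv_norm (𝕜 := ℝ) (show WithLp.toLp 2 g ≠ 0 by simpa using hg)
  rwa [hnorm, ← WithLp.toLp_smul, hnorm] at h

section Residual

variable {n : ℕ} (M : Finset (Fin n)) (v : Fin n → ℝ)

lemma l0_piecewise_zero_le : l0 (M.piecewise v 0) ≤ M.card := by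
  classical
  refine Finset.card_le_card fun i hi => ?_
  by_contra hiM
  exact (Finset.mem_filter.mp hi).2 (Finset.piecewise_eq_of_notMem _ _ _ hiM)

lemma l1_piecewise_zero : l1 (M.piecewise v 0) = ∑ i ∈ M, |v i| := by
  have hM : ∀ i ∈ M, |M.piecewise v 0 i| = |v i| := fun i hi => by
    rw [M.piecewise_eq_of_mem _ _ hi]
  have hMc : ∀ i ∈ Mᶜ, |M.piecewise v 0 i| = 0 := fun i hi => by
    rw [M.piecewise_eq_of_notMem _ _ (mem_compl.mp hi), Pi.zero_apply, abs_zero]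
  rw [l1, ← sum_add_sum_compl M, sum_congr rfl hM, sum_congr rfl hMc, sum_const_zero, add_zero]

lemma l1_piecewise_zero_sub : l1 (M.piecewise v 0 - v) = ∑ i ∈ Mᶜ, |v i| := by
  have hM : ∀ i ∈ M, |(M.piecewise v 0 - v) i| = 0 := fun i hi => by
    rw [Pi.sub_apply, M.piecewise_eq_of_mem _ _ hi, sub_self, abs_zero]
  have hMc : ∀ i ∈ Mᶜ, |(M.piecewise v 0 - v) i| = |v i| := fun i hi => by
    rw [Pi.sub_apply, M.piecewise_eq_of_notMem _ _ (mem_compl.mp hi), Pi.zero_apply, zero_sub,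
      abs_neg]
  rw [l1, ← sum_add_sum_compl M, sum_congr rfl hM, sum_congr rfl hMc, sum_const_zero, zero_add]

end Residual

theorem l1_no_recovery_above_breakdown_general {n p : ℕ} (X : Matrix (Fin n) (Fin p) ℝ)
    (hp : 0 < p) (hX : X.rank = p)
    (k : ℕ) (hk : mX X < k) (hkn : k ≤ n) (f : Fin p → ℝ) (α : ℝ) :
    ∃ (e : Fin n → ℝ) (gk : Fin p → ℝ), l0 e ≤ k ∧ Real.sqrt (∑ j, gk j ^ 2) = 1 ∧
      l1 (X.mulVec f + e - X.mulVec (f + α • gk)) ≤ l1 (X.mulVec f + e - X.mulVec f) := by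
  have hinj := Matrix.mulVec_injective_of_rank_eq (hX.trans (Fintype.card_fin p).symm)
  obtain ⟨M, hM, g, hg, hle⟩ := exists_sum_compl_le_sum_of_mX_lt hinj hp hk hkn
  set c := α * (√(∑ j, g j ^ 2))⁻¹
  refine ⟨M.piecewise (X.mulVec (c • g)) 0, (√(∑ j, g j ^ 2))⁻¹ • g,
    (l0_piecewise_zero_le M _).trans hM.le, sqrt_sum_sq_inv_smul_eq_one hg, ?_⟩
  rw [smul_smul, Matrix.mulVec_add, add_sub_add_left_eq_sub, add_sub_cancel_left,
    l1_piecewise_zero_sub, l1_piecewise_zero, sum_abs_mulVec_smul, sum_abs_mulVec_smul]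
  exact mul_le_mul_of_nonneg_left hle (abs_nonneg c)

theorem l1_no_recovery_above_breakdown {n p : ℕ} (X : Matrix (Fin n) (Fin p) ℝ)
    (hp : 0 < p) (hpn : p < n) (hX : X.rank = p)
    (k : ℕ) (hk : mX X < k) (hkn : k ≤ n) (f : Fin p → ℝ) (α : ℝ) (hα : 0 < α) :
    ∃ (e : Fin n → ℝ) (gk : Fin p → ℝ), l0 e ≤ k ∧ Real.sqrt (∑ j, gk j ^ 2) = 1 ∧
      l1 (X.mulVec f + e - X.mulVec (f + α • gk)) ≤ l1 (X.mulVec f + e - X.mulVec f) :=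
  l1_no_recovery_above_breakdown_general X hp hX k hk hkn f α
end

section
/- Let σ > 0 and consider ψ(g, b) = σ‖y - Xg - b‖₁ + ½‖b‖₂². A pair (ĝ, b̂) minimizes ψ over ℝᵖ × ℝⁿ if and only if Xᵀb̂ = 0 and, for every i, b̂_i = σ if y_i - x_iᵀĝ > σ, b̂_i = y_i - x_iᵀĝ if |y_i - x_iᵀĝ| ≤ σ, and b̂_i = -σ if y_i - x_iᵀĝ < -σ. In particular ‖b̂‖_∞ ≤ σ. -/
open Finset Matrix

private lemma sum_sub_single' {n : ℕ} (i : Fin n) (f g : Fin n → ℝ)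
    (h : ∀ j, j ≠ i → f j = g j) : (∑ j, f j) - (∑ j, g j) = f i - g i := by
  classical
  rw [← Finset.add_sum_erase _ f (Finset.mem_univ i),
      ← Finset.add_sum_erase _ g (Finset.mem_univ i)]
  have he : ∑ j ∈ Finset.univ.erase i, f j = ∑ j ∈ Finset.univ.erase i, g j :=
    Finset.sum_congr rfl fun j hj => h j (Finset.ne_of_mem_erase hj)
  rw [he]; ring

private lemma oneD (σ r c : ℝ) (hσ : 0 < σ) :
    σ * |r - (if σ < r then σ else if r < -σ then -σ else r)|
      + (1/2) * (if σ < r then σ else if r < -σ then -σ else r) ^ 2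
      + (1/2) * (c - (if σ < r then σ else if r < -σ then -σ else r)) ^ 2
    ≤ σ * |r - c| + (1/2) * c ^ 2 := by
  set T := (if σ < r then σ else if r < -σ then -σ else r) with hT
  have hT1 : |T| ≤ σ := by
    rw [hT]; split_ifs with h1 h2
    · rw [abs_of_pos hσ]
    · rw [abs_neg, abs_of_pos hσ]
    · exact abs_le.mpr ⟨by linarith, by linarith⟩
  have hT2 : σ * |r - T| = T * (r - T) := by
    rw [hT]; split_ifs with h1 h2
    · rw [abs_of_pos (by linarith)]
    · rw [abs_of_neg (by linarith)]; ring
    · simp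
  have hT3 : T * (r - c) ≤ σ * |r - c| :=
    calc T * (r - c) ≤ |T * (r - c)| := le_abs_self _
      _ = |T| * |r - c| := abs_mul _ _
      _ ≤ σ * |r - c| := mul_le_mul_of_nonneg_right hT1 (abs_nonneg _)
  nlinarith [hT2, hT3]

theorem psi_optimality_conditions {n p : ℕ} (X : Matrix (Fin n) (Fin p) ℝ)
    (hX : X.rank = p) (σ : ℝ) (hσ : 0 < σ) (y : Fin n → ℝ)
    (ghat : Fin p → ℝ) (bhat : Fin n → ℝ) :
    ((∀ (g : Fin p → ℝ) (b : Fin n → ℝ), psi X σ y ghat bhat ≤ psi X σ y g b) ↔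
      (Xᵀ.mulVec bhat = 0 ∧ ∀ i, bhat i =
        if σ < y i - X.mulVec ghat i then σ
        else if y i - X.mulVec ghat i < -σ then -σ
        else y i - X.mulVec ghat i)) ∧
    ((∀ (g : Fin p → ℝ) (b : Fin n → ℝ), psi X σ y ghat bhat ≤ psi X σ y g b) →
      ∀ i, |bhat i| ≤ σ) := by
  classical
  have habs : (∀ i, bhat i =
        if σ < y i - X.mulVec ghat i then σ
        else if y i - X.mulVec ghat i < -σ then -σ
        else y i - X.mulVec ghat i) → ∀ i, |bhat i| ≤ σ := by
    intro hform i
    rw [hform i]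
    split_ifs with h1 h2
    · rw [abs_of_pos hσ]
    · rw [abs_neg, abs_of_pos hσ]
    · exact abs_le.mpr ⟨by linarith, by linarith⟩
  have hiff : (∀ (g : Fin p → ℝ) (b : Fin n → ℝ), psi X σ y ghat bhat ≤ psi X σ y g b) ↔
      (Xᵀ.mulVec bhat = 0 ∧ ∀ i, bhat i =
        if σ < y i - X.mulVec ghat i then σ
        else if y i - X.mulVec ghat i < -σ then -σ
        else y i - X.mulVec ghat i) := by
    constructor
    · intro hmin
      constructor
      · -- Xᵀ bhat = 0
        funext j
        set A := ∑ i, X i j * bhat i with hA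
        have hB : (0:ℝ) ≤ ∑ i, (X i j) ^ 2 := Finset.sum_nonneg fun i _ => sq_nonneg _
        set B := ∑ i, (X i j) ^ 2 with hBdef
        have key : ∀ t : ℝ, 0 ≤ t ^ 2 * B - 2 * t * A := by
          intro t
          have hg : ∀ i, X.mulVec (fun k => ghat k + if k = j then t else 0) i
              = X.mulVec ghat i + X i j * t := by
            intro i
            simp only [Matrix.mulVec, dotProduct, mul_add, Finset.sum_add_distrib,
              mul_ite, mul_zero, Finset.sum_ite_eq', Finset.mem_univ, if_true]
          have h := hmin (fun k => ghat k + if k = j then t else 0)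
            (fun i => bhat i - t * X i j)
          simp only [psi, l1, Pi.sub_apply] at h
          have hres : ∀ i, |y i - X.mulVec (fun k => ghat k + if k = j then t else 0) i
              - (bhat i - t * X i j)| = |y i - X.mulVec ghat i - bhat i| := by
            intro i; rw [hg i]; ring_nf
          rw [Finset.sum_congr rfl fun i _ => hres i] at h
          have hsq : ∑ i, (bhat i - t * X i j) ^ 2
              = ∑ i, bhat i ^ 2 - 2 * t * A + t ^ 2 * B := by
            rw [hA, hBdef, Finset.mul_sum, Finset.mul_sum, ← Finset.sum_sub_distrib,
              ← Finset.sum_add_distrib]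
            exact Finset.sum_congr rfl fun i _ => by ring
          rw [hsq] at h
          linarith
        have h2 : (0:ℝ) < B + 2 := by linarith
        have hk := key (A / (B + 2))
        rw [div_pow] at hk
        have hk2 : 0 ≤ (A ^ 2 / (B + 2) ^ 2 * B - 2 * (A / (B + 2)) * A) * (B + 2) ^ 2 :=
          mul_nonneg hk (by positivity)
        have hexp : (A ^ 2 / (B + 2) ^ 2 * B - 2 * (A / (B + 2)) * A) * (B + 2) ^ 2
            = A ^ 2 * B - 2 * A ^ 2 * (B + 2) := by
          field_simp
        rw [hexp] at hk2
        have hA0 : A = 0 := by nlinarith [sq_nonneg A]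
        show (Xᵀ.mulVec bhat) j = 0
        simp only [Matrix.mulVec, dotProduct, Matrix.transpose_apply]
        rw [← hA]
        exact hA0
      · -- formula for bhat
        intro i
        set r := y i - X.mulVec ghat i with hr
        set T := (if σ < r then σ else if r < -σ then -σ else r) with hTdef
        have h := hmin ghat (fun k => if k = i then T else bhat k)
        simp only [psi, l1, Pi.sub_apply] at h
        have e1 := sum_sub_single' i
          (fun k => |y k - X.mulVec ghat k - if k = i then T else bhat k|)
          (fun k => |y k - X.mulVec ghat k - bhat k|)
          (fun k hk => by simp [hk])
        have e2 := sum_sub_single' i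
          (fun k => (if k = i then T else bhat k) ^ 2)
          (fun k => bhat k ^ 2)
          (fun k hk => by simp [hk])
        simp only [if_true] at e1 e2
        have e1' : σ * ((∑ x, |y x - X.mulVec ghat x - if x = i then T else bhat x|)
            - ∑ x, |y x - X.mulVec ghat x - bhat x|)
            = σ * (|y i - X.mulVec ghat i - T| - |y i - X.mulVec ghat i - bhat i|) := by
          rw [e1]
        rw [mul_sub, mul_sub] at e1'
        have hone := oneD σ r (bhat i) hσ
        rw [← hTdef, hr] at hone
        have hsq : (bhat i - T) ^ 2 ≤ 0 := by nlinarith [hone, e1', e2, h, hσ]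
        have : bhat i - T = 0 := by nlinarith [sq_nonneg (bhat i - T)]
        linarith
    · rintro ⟨hXb, hform⟩ g b
      have hble := habs hform
      -- per-index facts
      have hu : ∀ i, σ * |y i - X.mulVec ghat i - bhat i|
          = bhat i * (y i - X.mulVec ghat i - bhat i) := by
        intro i
        rcases lt_trichotomy σ (y i - X.mulVec ghat i) with h1 | h1 | h1
        · rw [hform i, if_pos h1, abs_of_pos (by linarith)]
        · rw [hform i, if_neg (by linarith), if_neg (by linarith)]
          simp
        · by_cases h2 : y i - X.mulVec ghat i < -σ
          · rw [hform i, if_neg (by linarith), if_pos h2, abs_of_neg (by linarith)]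
            ring
          · rw [hform i, if_neg (by linarith), if_neg h2]
            simp
      have hv : ∀ i, bhat i * (y i - X.mulVec g i - b i)
          ≤ σ * |y i - X.mulVec g i - b i| := fun i =>
        calc bhat i * (y i - X.mulVec g i - b i)
            ≤ |bhat i * (y i - X.mulVec g i - b i)| := le_abs_self _
          _ = |bhat i| * |y i - X.mulVec g i - b i| := abs_mul _ _
          _ ≤ σ * |y i - X.mulVec g i - b i| :=
              mul_le_mul_of_nonneg_right (hble i) (abs_nonneg _)
      have hz : ∑ i, bhat i * (X.mulVec ghat i - X.mulVec g i) = 0 := by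
        have : ∀ i, X.mulVec ghat i - X.mulVec g i = X.mulVec (ghat - g) i := by
          intro i; rw [Matrix.mulVec_sub]; rfl
        rw [Finset.sum_congr rfl fun i _ => by rw [this i]]
        have : ∑ i, bhat i * X.mulVec (ghat - g) i = bhat ⬝ᵥ X.mulVec (ghat - g) := rfl
        rw [this, Matrix.dotProduct_mulVec, ← Matrix.mulVec_transpose, hXb]
        simp [dotProduct]
      have hterm : ∀ i, 0 ≤ σ * |y i - X.mulVec g i - b i| + (1/2) * b i ^ 2
          - σ * |y i - X.mulVec ghat i - bhat i| - (1/2) * bhat i ^ 2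
          - bhat i * (X.mulVec ghat i - X.mulVec g i) := by
        intro i
        nlinarith [hu i, hv i, sq_nonneg (b i - bhat i)]
      have hsum := Finset.sum_nonneg fun i (_ : i ∈ Finset.univ) => hterm i
      have hexpand : ∑ i, (σ * |y i - X.mulVec g i - b i| + (1/2) * b i ^ 2
          - σ * |y i - X.mulVec ghat i - bhat i| - (1/2) * bhat i ^ 2
          - bhat i * (X.mulVec ghat i - X.mulVec g i))
          = (σ * ∑ i, |y i - X.mulVec g i - b i|) + (1/2) * ∑ i, b i ^ 2
            - ((σ * ∑ i, |y i - X.mulVec ghat i - bhat i|) + (1/2) * ∑ i, bhat i ^ 2)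
            - ∑ i, bhat i * (X.mulVec ghat i - X.mulVec g i) := by
        simp only [Finset.mul_sum]
        rw [Finset.sum_sub_distrib, Finset.sum_sub_distrib, Finset.sum_sub_distrib,
          Finset.sum_add_distrib]
        ring
      rw [hexpand, hz] at hsum
      simp only [psi, l1, Pi.sub_apply]
      linarith
  exact ⟨hiff, fun hmin => habs (hiff.mp hmin).2⟩
end

section
/- Let σ > 0 and ψ(g, b) = σ‖y - Xg - b‖₁ + ½‖b‖₂². Then min_{(g,b)} ψ(g,b) = max_{u ∈ σP*} (uᵀy - ½‖u‖₂²), where P* = {u ∈ ker Xᵀ : ‖u‖_∞ ≤ 1}; i.e., strong duality holds between this primal and dual problem. -/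
open Finset Matrix

/-!
Minimising `σ|t - b| + b²/2` over `b` gives the Huber function
`huber σ t = max_{|u| ≤ σ} (u t - u²/2)`, attained at `b = u = clip σ t`, the projection of `t`
onto `[-σ, σ]`. The Huber loss of the residual `y - v` is coercive, so it attains its minimum on the
subspace `range X`, say at `X g₀`; since the Huber function is smooth with derivative `clip σ`, the
first-order condition says that `u = clip σ (y - X g₀)` is orthogonal to `range X`, i.e. lies in
`ker Xᵀ`. This `u` is dual feasible with dual value equal to the primal value at `(g₀, u)`, and the
max formula gives weak duality.
-/

noncomputable def clip (σ t : ℝ) : ℝ := max (-σ) (min σ t)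

noncomputable def huber (σ t : ℝ) : ℝ := t * clip σ t - clip σ t ^ 2 / 2

noncomputable def huberLoss {ι : Type*} [Fintype ι] (σ : ℝ) (r : ι → ℝ) : ℝ :=
  ∑ i, huber σ (r i)

section Huber

variable {σ : ℝ}

lemma abs_clip_le (hσ : 0 ≤ σ) (t : ℝ) : |clip σ t| ≤ σ :=
  abs_le.mpr ⟨le_max_left _ _, max_le (by linarith) (min_le_left _ _)⟩

lemma abs_clip_sub_clip_le (σ a b : ℝ) : |clip σ a - clip σ b| ≤ |a - b| := by
  unfold clip
  rcases abs_cases (a - b) with ⟨h1, h2⟩ | ⟨h1, h2⟩ <;>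
  · simp only [max_def, min_def]
    split_ifs <;> rw [abs_sub_le_iff] <;> constructor <;> linarith

lemma continuous_clip (σ : ℝ) : Continuous (clip σ) :=
  continuous_const.max (continuous_const.min continuous_id)

lemma continuous_huber (σ : ℝ) : Continuous (huber σ) :=
  (continuous_id.mul (continuous_clip σ)).sub (((continuous_clip σ).pow 2).div_const 2)

/-- The variational inequality of the projection onto `[-σ, σ]`. -/
lemma clip_sub_mul_sub_clip_nonneg {u : ℝ} (hu : |u| ≤ σ) (t : ℝ) :
    0 ≤ (clip σ t - u) * (t - clip σ t) := by
  obtain ⟨hu₁, hu₂⟩ := abs_le.mp hu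
  unfold clip
  rcases le_total σ t with h | h
  · rw [min_eq_left h, max_eq_right (by linarith)]
    nlinarith
  · rw [min_eq_right h]
    rcases le_total (-σ) t with h' | h'
    · rw [max_eq_right h']
      simp
    · rw [max_eq_left h']
      nlinarith

lemma mul_sub_sq_le_huber {u : ℝ} (hu : |u| ≤ σ) (t : ℝ) : u * t - u ^ 2 / 2 ≤ huber σ t := by
  have := clip_sub_mul_sub_clip_nonneg hu t
  unfold huber
  nlinarith [sq_nonneg (clip σ t - u)]

lemma huber_le (hσ : 0 ≤ σ) (t b : ℝ) : huber σ t ≤ σ * |t - b| + b ^ 2 / 2 := by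
  have h : clip σ t * (t - b) ≤ σ * |t - b| :=
    (le_abs_self _).trans ((abs_mul _ _).trans_le
      (mul_le_mul_of_nonneg_right (abs_clip_le hσ t) (abs_nonneg _)))
  unfold huber
  nlinarith [sq_nonneg (b - clip σ t)]

lemma huber_eq_sigma_mul_abs_sub_clip_add (hσ : 0 ≤ σ) (t : ℝ) :
    huber σ t = σ * |t - clip σ t| + clip σ t ^ 2 / 2 := by
  unfold huber clip
  rcases le_total σ t with h | h
  · rw [min_eq_left h, max_eq_right (by linarith), abs_of_nonneg (by linarith)]
    ring
  · rw [min_eq_right h]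
    rcases le_total (-σ) t with h' | h'
    · rw [max_eq_right h', sub_self, abs_zero, mul_zero, zero_add]
      ring
    · rw [max_eq_left h', abs_of_nonpos (by linarith)]
      ring

lemma huber_nonneg (hσ : 0 ≤ σ) (t : ℝ) : 0 ≤ huber σ t := by
  simpa using mul_sub_sq_le_huber (u := 0) (by simpa using hσ) t

lemma sigma_mul_abs_le_huber (hσ : 0 ≤ σ) (t : ℝ) : σ * |t| ≤ huber σ t + σ ^ 2 / 2 := by
  rcases le_total 0 t with h | h
  · have := mul_sub_sq_le_huber (u := σ) (by rw [abs_of_nonneg hσ]) t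
    rw [abs_of_nonneg h]
    linarith
  · have := mul_sub_sq_le_huber (u := -σ) (by rw [abs_neg, abs_of_nonneg hσ]) t
    rw [abs_of_nonpos h]
    linarith

lemma huber_le_add_clip_mul_add_sq (hσ : 0 ≤ σ) (t t' : ℝ) :
    huber σ t' ≤ huber σ t + clip σ t * (t' - t) + (t' - t) ^ 2 := by
  have h₁ := mul_sub_sq_le_huber (abs_clip_le hσ t') t
  have h₂ : (clip σ t' - clip σ t) * (t' - t) ≤ (t' - t) ^ 2 := by
    calc (clip σ t' - clip σ t) * (t' - t) ≤ |clip σ t' - clip σ t| * |t' - t| :=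
          (le_abs_self _).trans (abs_mul _ _).le
      _ ≤ |t' - t| * |t' - t| :=
          mul_le_mul_of_nonneg_right (abs_clip_sub_clip_le σ t' t) (abs_nonneg _)
      _ = (t' - t) ^ 2 := by rw [← abs_mul, ← sq, abs_sq]
  unfold huber at h₁ ⊢
  nlinarith

end Huber

section HuberLoss

open Filter

variable {ι : Type*} [Fintype ι] {σ : ℝ}

lemma continuous_huberLoss (σ : ℝ) : Continuous (huberLoss σ : (ι → ℝ) → ℝ) :=
  continuous_finsetSum _ fun i _ => (continuous_huber σ).comp (continuous_apply i)

lemma sigma_mul_norm_le_huberLoss (hσ : 0 < σ) (r : ι → ℝ) :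
    σ * ‖r‖ ≤ huberLoss σ r + σ ^ 2 / 2 := by
  have hloss : 0 ≤ huberLoss σ r := sum_nonneg fun i _ => huber_nonneg hσ.le _
  rw [← le_div_iff₀' hσ]
  refine (pi_norm_le_iff_of_nonneg (div_nonneg (by positivity) hσ.le)).mpr fun i => ?_
  rw [le_div_iff₀' hσ, Real.norm_eq_abs]
  have : huber σ (r i) ≤ huberLoss σ r :=
    single_le_sum (f := fun j => huber σ (r j)) (fun j _ => huber_nonneg hσ.le _) (mem_univ i)
  linarith [sigma_mul_abs_le_huber hσ.le (r i)]

lemma exists_forall_huberLoss_sub_le (hσ : 0 < σ) (V : Submodule ℝ (ι → ℝ)) (y : ι → ℝ) :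
    ∃ v ∈ V, ∀ w ∈ V, huberLoss σ (y - v) ≤ huberLoss σ (y - w) := by
  let f : V → ℝ := fun v => huberLoss σ (y - (v : ι → ℝ))
  have hcont : Continuous f :=
    (continuous_huberLoss σ).comp (continuous_const.sub continuous_subtype_val)
  have hcoercive : Tendsto f (cocompact V) atTop := by
    refine tendsto_atTop_mono (fun v => ?_) (tendsto_atTop_add_const_right _
      (-(σ * ‖y‖ + σ ^ 2 / 2)) (tendsto_norm_cocompact_atTop.const_mul_atTop hσ))
    have hv : ‖(v : ι → ℝ)‖ ≤ ‖y‖ + ‖y - (v : ι → ℝ)‖ := by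
      simpa using norm_sub_le y (y - v)
    have := sigma_mul_norm_le_huberLoss hσ (y - (v : ι → ℝ))
    rw [Submodule.coe_norm]
    nlinarith
  obtain ⟨v, hv⟩ := hcont.exists_forall_le hcoercive
  exact ⟨v, v.2, fun w hw => hv ⟨w, hw⟩⟩

lemma huberLoss_sub_smul_le (hσ : 0 ≤ σ) (r w : ι → ℝ) (s : ℝ) :
    huberLoss σ (r - s • w) ≤
      huberLoss σ r - s * ((fun i => clip σ (r i)) ⬝ᵥ w) + s ^ 2 * (w ⬝ᵥ w) := by
  rw [huberLoss, huberLoss, dotProduct, dotProduct, mul_sum, mul_sum, ← sum_sub_distrib,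
    ← sum_add_distrib]
  refine sum_le_sum fun i _ => ?_
  simp only [Pi.sub_apply, Pi.smul_apply, smul_eq_mul]
  exact (huber_le_add_clip_mul_add_sq hσ (r i) (r i - s * w i)).trans_eq (by ring)

lemma eq_zero_of_forall_mul_le_sq_mul {A M : ℝ} (h : ∀ s : ℝ, s * A ≤ s ^ 2 * M) : A = 0 := by
  have hc : 0 < |M| + 1 := by positivity
  have h₁ := h (A / (|M| + 1))
  rw [div_pow, div_mul_eq_mul_div, div_mul_eq_mul_div, div_le_div_iff₀ hc (by positivity)] at h₁
  have h₂ : A ^ 2 * (|M| + 1) ≤ A ^ 2 * M := by nlinarith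
  nlinarith [le_abs_self M, sq_nonneg A]

lemma clip_dotProduct_eq_zero_of_forall_le (hσ : 0 ≤ σ) {r w : ι → ℝ}
    (hmin : ∀ s : ℝ, huberLoss σ r ≤ huberLoss σ (r - s • w)) :
    (fun i => clip σ (r i)) ⬝ᵥ w = 0 :=
  eq_zero_of_forall_mul_le_sq_mul (M := w ⬝ᵥ w) fun s => by
    linarith [hmin s, huberLoss_sub_smul_le hσ r w s]

lemma dotProduct_sub_half_sq_le_huberLoss {u : ι → ℝ} (hu : ∀ i, |u i| ≤ σ) (r : ι → ℝ) :
    u ⬝ᵥ r - (1/2) * ∑ i, u i ^ 2 ≤ huberLoss σ r := by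
  rw [mul_sum, dotProduct, ← sum_sub_distrib]
  exact sum_le_sum fun i _ => by linarith [mul_sub_sq_le_huber (hu i) (r i)]

lemma clip_dotProduct_sub_half_sq_eq_huberLoss (σ : ℝ) (r : ι → ℝ) :
    (fun i => clip σ (r i)) ⬝ᵥ r - (1/2) * ∑ i, clip σ (r i) ^ 2 = huberLoss σ r := by
  rw [mul_sum, dotProduct, ← sum_sub_distrib]
  exact sum_congr rfl fun i _ => by unfold huber; ring

end HuberLoss

lemma transpose_mulVec_eq_zero_iff {m k : Type*} [Fintype m] [Fintype k]
    (X : Matrix m k ℝ) (u : m → ℝ) : Xᵀ *ᵥ u = 0 ↔ ∀ g, u ⬝ᵥ X *ᵥ g = 0 := by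
  simp_rw [dotProduct_mulVec, ← mulVec_transpose]
  refine ⟨fun h g => by simp [h], fun h => ?_⟩
  exact dotProduct_self_eq_zero.mp (h _)

lemma psi_eq_sum {n p : ℕ} (X : Matrix (Fin n) (Fin p) ℝ) (σ : ℝ) (y : Fin n → ℝ)
    (g : Fin p → ℝ) (b : Fin n → ℝ) :
    psi X σ y g b = ∑ i, (σ * |(y - X *ᵥ g) i - b i| + b i ^ 2 / 2) := by
  rw [psi, l1, mul_sum, mul_sum, ← sum_add_distrib]
  exact sum_congr rfl fun i _ => by simp only [Pi.sub_apply]; ring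

theorem psi_strong_duality_general {n p : ℕ} (X : Matrix (Fin n) (Fin p) ℝ)
    (σ : ℝ) (hσ : 0 < σ) (y : Fin n → ℝ) :
    ∃ γ : ℝ,
      IsLeast {r | ∃ (g : Fin p → ℝ) (b : Fin n → ℝ), r = psi X σ y g b} γ ∧
      IsGreatest {r | ∃ u : Fin n → ℝ, Xᵀ.mulVec u = 0 ∧ (∀ i, |u i| ≤ σ) ∧
        r = (∑ i, u i * y i) - (1/2) * ∑ i, u i ^ 2} γ := by
  obtain ⟨_, ⟨g₀, rfl⟩, hmin⟩ := exists_forall_huberLoss_sub_le hσ (LinearMap.range X.mulVecLin) y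
  simp only [mulVecLin_apply] at hmin
  set r := y - X *ᵥ g₀
  set u := fun i => clip σ (r i)
  have hXu : Xᵀ *ᵥ u = 0 := (transpose_mulVec_eq_zero_iff X u).mpr fun g =>
    clip_dotProduct_eq_zero_of_forall_le hσ.le fun s => by
      simpa [r, sub_sub, mulVec_add, mulVec_smul] using hmin _ ⟨g₀ + s • g, rfl⟩
  have hdual : ∀ w, Xᵀ *ᵥ w = 0 → w ⬝ᵥ y = w ⬝ᵥ r := fun w hw => by
    rw [dotProduct_sub, (transpose_mulVec_eq_zero_iff X w).mp hw, sub_zero]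
  refine ⟨huberLoss σ r, ⟨⟨g₀, u, ?_⟩, ?_⟩, ⟨u, hXu, fun i => abs_clip_le hσ.le _, ?_⟩, ?_⟩
  · rw [psi_eq_sum]
    exact sum_congr rfl fun i _ => huber_eq_sigma_mul_abs_sub_clip_add hσ.le _
  · rintro _ ⟨g, b, rfl⟩
    rw [psi_eq_sum]
    exact (hmin _ ⟨g, rfl⟩).trans (sum_le_sum fun i _ => huber_le hσ.le _ _)
  · rw [← clip_dotProduct_sub_half_sq_eq_huberLoss σ r]
    exact congrArg (· - _) (hdual u hXu).symm
  · rintro _ ⟨w, hXw, hw, rfl⟩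
    change w ⬝ᵥ y - _ ≤ _
    rw [hdual w hXw]
    exact dotProduct_sub_half_sq_le_huberLoss hw r

theorem psi_strong_duality {n p : ℕ} (X : Matrix (Fin n) (Fin p) ℝ)
    (hX : X.rank = p) (σ : ℝ) (hσ : 0 < σ) (y : Fin n → ℝ) :
    ∃ γ : ℝ,
      IsLeast {r | ∃ (g : Fin p → ℝ) (b : Fin n → ℝ), r = psi X σ y g b} γ ∧
      IsGreatest {r | ∃ u : Fin n → ℝ, Xᵀ.mulVec u = 0 ∧ (∀ i, |u i| ≤ σ) ∧
        r = (∑ i, u i * y i) - (1/2) * ∑ i, u i ^ 2} γ :=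
  psi_strong_duality_general X σ hσ y
end

section
/- For any y ∈ ℝⁿ, min_{g∈ℝᵖ} ‖y - Xg‖₁ = max{dᵀy : d ∈ ker Xᵀ, ‖d‖_∞ ≤ 1}. -/
open Finset Matrix

noncomputable abbrev E1' (n : ℕ) := PiLp 1 (fun _ : Fin n => ℝ)

noncomputable def toE1 {n : ℕ} : (Fin n → ℝ) ≃ₗ[ℝ] E1' n :=
  (WithLp.linearEquiv 1 ℝ (Fin n → ℝ)).symm

lemma toE1_norm {n : ℕ} (x : Fin n → ℝ) : ‖toE1 x‖ = l1 x := by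
  rw [PiLp.norm_eq_sum (by norm_num : 0 < (1:ENNReal).toReal)]
  simp [toE1, l1]


theorem l1_lp_duality {n p : ℕ} (X : Matrix (Fin n) (Fin p) ℝ) (y : Fin n → ℝ) :
    ∃ γ : ℝ,
      IsLeast {r | ∃ g : Fin p → ℝ, r = l1 (y - X.mulVec g)} γ ∧
      IsGreatest {r | ∃ d : Fin n → ℝ, Xᵀ.mulVec d = 0 ∧ (∀ i, |d i| ≤ 1) ∧
        r = ∑ i, d i * y i} γ := by
    classical
  set V : Submodule ℝ (E1' n) :=
    (LinearMap.range X.mulVecLin).map (toE1.toLinearMap : (Fin n → ℝ) →ₗ[ℝ] E1' n) with hV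
  have hVmem : ∀ g : Fin p → ℝ, toE1 (X.mulVec g) ∈ V := by
    intro g
    exact Submodule.mem_map_of_mem ⟨g, rfl⟩
  haveI hVclosed : IsClosed (V : Set (E1' n)) := Submodule.closed_of_finiteDimensional V
  -- nearest point
  obtain ⟨v₀, hv₀V, hv₀⟩ := hVclosed.exists_infDist_eq_dist ⟨0, V.zero_mem⟩ (toE1 y)
  obtain ⟨w, ⟨g₀, hg₀⟩, hw⟩ := hv₀V
  set γ : ℝ := Metric.infDist (toE1 y) (V : Set (E1' n)) with hγ
  have hγ_eq : γ = l1 (y - X.mulVec g₀) := by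
    rw [hγ] at hv₀
    show Metric.infDist (toE1 y) (V : Set (E1' n)) = _
    rw [hv₀, dist_eq_norm, ← hw]
    have hgw : (w : Fin n → ℝ) = X.mulVec g₀ := hg₀.symm
    rw [hgw]; exact toE1_norm _
  -- quotient and dual vector
  obtain ⟨f, hf1, hf2⟩ :=
    exists_dual_vector'' ℝ ((Submodule.Quotient.mk (toE1 y)) : E1' n ⧸ V)
  -- the functional ψ
  set ψ : (Fin n → ℝ) →ₗ[ℝ] ℝ :=
    f.toLinearMap ∘ₗ V.mkQ ∘ₗ (toE1.toLinearMap : (Fin n → ℝ) →ₗ[ℝ] E1' n) with hψ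
  have hψ_apply : ∀ x : Fin n → ℝ, ψ x = f (Submodule.Quotient.mk (toE1 x)) := fun _ => rfl
  have hψ_zero : ∀ g : Fin p → ℝ, ψ (X.mulVec g) = 0 := by
    intro g
    rw [hψ_apply]
    rw [show (Submodule.Quotient.mk (toE1 (X.mulVec g)) : E1' n ⧸ V) = 0 from
      (Submodule.Quotient.mk_eq_zero V).2 (hVmem g)]
    simp
  have hψ_y : ψ y = γ := by
    rw [hψ_apply, hf2]
    show ‖(Submodule.Quotient.mk (toE1 y) : E1' n ⧸ V)‖ = γ
    exact QuotientAddGroup.norm_mk (toE1 y)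
  have hψ_bound : ∀ x : Fin n → ℝ, |ψ x| ≤ l1 x := by
    intro x
    rw [hψ_apply]
    calc |f (Submodule.Quotient.mk (toE1 x))| ≤ ‖f‖ * ‖(Submodule.Quotient.mk (toE1 x) : E1' n ⧸ V)‖ :=
          f.le_opNorm _
      _ ≤ 1 * ‖toE1 x‖ :=
          mul_le_mul hf1 (Submodule.Quotient.norm_mk_le V _) (norm_nonneg _) zero_le_one
      _ = l1 x := by rw [one_mul, toE1_norm]
  set d : Fin n → ℝ := fun i => ψ (Pi.single i 1) with hd
  have hψ_sum : ∀ x : Fin n → ℝ, ψ x = ∑ i, x i * d i := by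
    intro x
    have hx : x = ∑ i, x i • (Pi.single i 1 : Fin n → ℝ) := by
      funext k
      simp [Pi.single_apply, Finset.sum_apply]
    conv_lhs => rw [hx]
    rw [map_sum]
    simp [hd, smul_eq_mul]
  have hd_le : ∀ i, |d i| ≤ 1 := by
    intro i
    have := hψ_bound (Pi.single i 1)
    have h1 : l1 (Pi.single i (1:ℝ)) = 1 := by
      simp [l1, Pi.single_apply, apply_ite abs, abs_one]
    rw [h1] at this
    exact this
  refine ⟨γ, ⟨⟨g₀, hγ_eq⟩, ?_⟩, ⟨⟨d, ?_, hd_le, ?_⟩, ?_⟩⟩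
  · -- lower bound
    rintro r ⟨g, rfl⟩
    have : toE1 (X.mulVec g) ∈ (V : Set (E1' n)) := hVmem g
    calc γ ≤ dist (toE1 y) (toE1 (X.mulVec g)) := Metric.infDist_le_dist_of_mem this
      _ = l1 (y - X.mulVec g) := by rw [dist_eq_norm, ← map_sub, toE1_norm]
  · -- Xᵀ d = 0
    funext j
    have : (fun i => X i j) = X.mulVec (Pi.single j 1) := by
      funext i
      simp [Matrix.mulVec, dotProduct, Pi.single_apply]
    have h0 := hψ_zero (Pi.single j 1)
    rw [← this] at h0
    rw [hψ_sum] at h0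
    show ∑ i, Xᵀ j i * d i = 0
    simpa [Matrix.transpose_apply] using h0
  · -- value
    have := hψ_y
    rw [hψ_sum] at this
    rw [← this]
    exact Finset.sum_congr rfl fun i _ => mul_comm _ _
  · -- upper bound
    rintro r ⟨d', hd'0, hd'le, rfl⟩
    have hsplit : ∑ i, d' i * y i
        = ∑ i, d' i * (y i - X.mulVec g₀ i) + ∑ i, d' i * X.mulVec g₀ i := by
      rw [← Finset.sum_add_distrib]
      congr 1; funext i; ring
    have hzero : ∑ i, d' i * X.mulVec g₀ i = 0 := by
      have : ∑ i, d' i * X.mulVec g₀ i = ∑ j, (Xᵀ.mulVec d') j * g₀ j := by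
        simp only [Matrix.mulVec, dotProduct, Matrix.transpose_apply,
          Finset.mul_sum, Finset.sum_mul]
        rw [Finset.sum_comm]
        congr 1; funext j; congr 1; funext i; ring
      rw [this, hd'0]
      simp
    rw [hsplit, hzero, add_zero, hγ_eq]
    calc ∑ i, d' i * (y i - X.mulVec g₀ i) ≤ ∑ i, |d' i * (y i - X.mulVec g₀ i)| :=
          Finset.sum_le_sum fun i _ => le_abs_self _
      _ ≤ ∑ i, |(y - X.mulVec g₀) i| := by
          apply Finset.sum_le_sum
          intro i _
          rw [abs_mul]
          calc |d' i| * |y i - X.mulVec g₀ i| ≤ 1 * |y i - X.mulVec g₀ i| :=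
                mul_le_mul_of_nonneg_right (hd'le i) (abs_nonneg _)
            _ = |(y - X.mulVec g₀) i| := by simp
      _ = l1 (y - X.mulVec g₀) := rfl
end

section
/- Let y = Xf + z with z = Xḡ + b̄, b̄ ∈ ker Xᵀ, and suppose ‖b̄‖_∞ < σ. Then (f_n, b̄) with f_n = f + ḡ is the unique minimizer of ψ(g, b) = σ‖y - Xg - b‖₁ + ½‖b‖₂² over ℝᵖ × ℝⁿ. -/
open Finset Matrix

theorem lse_recovered_without_outliers {n p : ℕ} (X : Matrix (Fin n) (Fin p) ℝ)
    (hX : X.rank = p) (σ : ℝ) (hσ : 0 < σ)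
    (f gbar : Fin p → ℝ) (z bbar y : Fin n → ℝ)
    (hy : y = X.mulVec f + z)
    (hz : z = X.mulVec gbar + bbar) (hb : Xᵀ.mulVec bbar = 0)
    (hbound : ∀ i, |bbar i| < σ) :
    (∀ (g : Fin p → ℝ) (b : Fin n → ℝ),
      psi X σ y (f + gbar) bbar ≤ psi X σ y g b) ∧
    (∀ (g : Fin p → ℝ) (b : Fin n → ℝ),
      psi X σ y g b ≤ psi X σ y (f + gbar) bbar → g = f + gbar ∧ b = bbar) := by
  -- injectivity of mulVec
  have hinj : Function.Injective X.mulVec := by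
    have h1 := LinearMap.finrank_range_add_finrank_ker X.mulVecLin
    rw [show Module.finrank ℝ (LinearMap.range X.mulVecLin) = X.rank from rfl, hX,
      Module.finrank_pi ℝ, Fintype.card_fin] at h1
    have hker : LinearMap.ker X.mulVecLin = ⊥ := Submodule.finrank_eq_zero.mp (by omega)
    exact LinearMap.ker_eq_bot.mp hker
  have hyX : y = X.mulVec (f + gbar) + bbar := by
    rw [hy, hz, Matrix.mulVec_add]; abel
  have hpsistar : psi X σ y (f + gbar) bbar = (1/2) * ∑ i, bbar i ^ 2 := by
    have h0 : y - X.mulVec (f + gbar) - bbar = 0 := by rw [hyX]; abel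
    have h0i : ∀ i, y i - (X.mulVec (f + gbar)) i - bbar i = 0 := fun i => congrFun h0 i
    unfold psi l1
    simp [h0i]
  have key : ∀ (g : Fin p → ℝ) (b : Fin n → ℝ),
      psi X σ y g b = (1/2) * ∑ i, bbar i ^ 2
        + ∑ i, (σ * |(y - X.mulVec g - b) i| - bbar i * ((y - X.mulVec g - b) i))
        + (1/2) * ∑ i, (X.mulVec (g - (f + gbar)) i + (y - X.mulVec g - b) i) ^ 2 := by
    intro g b
    have horth : ∑ i, bbar i * X.mulVec (g - (f + gbar)) i = 0 := by
      have hc : ∑ i, bbar i * X.mulVec (g - (f + gbar)) i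
          = ∑ j, Xᵀ.mulVec bbar j * (g - (f + gbar)) j := by
        simp only [Matrix.mulVec, dotProduct, Matrix.transpose_apply,
          Finset.mul_sum, Finset.sum_mul]
        rw [Finset.sum_comm]
        apply Finset.sum_congr rfl; intro j _
        apply Finset.sum_congr rfl; intro i _
        ring
      rw [hc]
      simp [show ∀ j, Xᵀ.mulVec bbar j = 0 from fun j => congrFun hb j]
    have hbi : ∀ i, b i = bbar i - (X.mulVec (g - (f + gbar)) i + (y - X.mulVec g - b) i) := by
      intro i
      have hyi := congrFun hyX i
      simp only [Pi.add_apply, Pi.sub_apply, Matrix.mulVec_sub] at hyi ⊢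
      linarith
    have expand : ∑ i, b i ^ 2 = ∑ i, (bbar i) ^ 2
        - 2 * ∑ i, bbar i * X.mulVec (g - (f + gbar)) i
        - 2 * ∑ i, bbar i * (y - X.mulVec g - b) i
        + ∑ i, (X.mulVec (g - (f + gbar)) i + (y - X.mulVec g - b) i) ^ 2 := by
      have : ∀ i ∈ Finset.univ, b i ^ 2 = (bbar i) ^ 2
          - 2 * (bbar i * X.mulVec (g - (f + gbar)) i)
          - 2 * (bbar i * (y - X.mulVec g - b) i)
          + (X.mulVec (g - (f + gbar)) i + (y - X.mulVec g - b) i) ^ 2 := by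
        intro i _
        rw [hbi i]; ring
      rw [Finset.sum_congr rfl this]
      simp [Finset.sum_add_distrib, Finset.sum_sub_distrib, Finset.mul_sum]
    have hsplit : ∑ i, (σ * |(y - X.mulVec g - b) i| - bbar i * ((y - X.mulVec g - b) i))
        = σ * ∑ i, |(y - X.mulVec g - b) i| - ∑ i, bbar i * (y - X.mulVec g - b) i := by
      rw [Finset.sum_sub_distrib, Finset.mul_sum]
    unfold psi l1
    rw [expand, horth, hsplit]
    ring
  constructor
  · intro g b
    rw [key g b, hpsistar]
    have h1 : 0 ≤ ∑ i, (σ * |(y - X.mulVec g - b) i| - bbar i * ((y - X.mulVec g - b) i)) := by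
      apply Finset.sum_nonneg
      intro i _
      have hc : bbar i * (y - X.mulVec g - b) i ≤ σ * |(y - X.mulVec g - b) i| :=
        calc bbar i * (y - X.mulVec g - b) i ≤ |bbar i * (y - X.mulVec g - b) i| := le_abs_self _
          _ = |bbar i| * |(y - X.mulVec g - b) i| := abs_mul _ _
          _ ≤ σ * |(y - X.mulVec g - b) i| :=
            mul_le_mul_of_nonneg_right (hbound i).le (abs_nonneg _)
      linarith
    have h2 : 0 ≤ ∑ i, (X.mulVec (g - (f + gbar)) i + (y - X.mulVec g - b) i) ^ 2 :=
      Finset.sum_nonneg fun i _ => sq_nonneg _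
    linarith
  · intro g b hle
    rw [key g b, hpsistar] at hle
    have h1nn : ∀ i ∈ Finset.univ,
        0 ≤ σ * |(y - X.mulVec g - b) i| - bbar i * ((y - X.mulVec g - b) i) := by
      intro i _
      have hc : bbar i * (y - X.mulVec g - b) i ≤ σ * |(y - X.mulVec g - b) i| :=
        calc bbar i * (y - X.mulVec g - b) i ≤ |bbar i * (y - X.mulVec g - b) i| := le_abs_self _
          _ = |bbar i| * |(y - X.mulVec g - b) i| := abs_mul _ _
          _ ≤ σ * |(y - X.mulVec g - b) i| :=
            mul_le_mul_of_nonneg_right (hbound i).le (abs_nonneg _)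
      linarith
    have h1 : 0 ≤ ∑ i, (σ * |(y - X.mulVec g - b) i| - bbar i * ((y - X.mulVec g - b) i)) :=
      Finset.sum_nonneg h1nn
    have h2nn : ∀ i ∈ Finset.univ,
        (0:ℝ) ≤ (X.mulVec (g - (f + gbar)) i + (y - X.mulVec g - b) i) ^ 2 :=
      fun i _ => sq_nonneg _
    have h2 : 0 ≤ ∑ i, (X.mulVec (g - (f + gbar)) i + (y - X.mulVec g - b) i) ^ 2 :=
      Finset.sum_nonneg h2nn
    have hS1 : ∑ i, (σ * |(y - X.mulVec g - b) i| - bbar i * ((y - X.mulVec g - b) i)) = 0 := by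
      linarith
    have hS2 : ∑ i, (X.mulVec (g - (f + gbar)) i + (y - X.mulVec g - b) i) ^ 2 = 0 := by
      linarith
    have hr : ∀ i, (y - X.mulVec g - b) i = 0 := by
      intro i
      have hterm := (Finset.sum_eq_zero_iff_of_nonneg h1nn).mp hS1 i (Finset.mem_univ i)
      by_contra habs
      have habspos : 0 < |(y - X.mulVec g - b) i| := abs_pos.mpr habs
      have : bbar i * (y - X.mulVec g - b) i ≤ |bbar i| * |(y - X.mulVec g - b) i| := by
        rw [← abs_mul]; exact le_abs_self _
      nlinarith [hbound i]
    have hw : ∀ i, X.mulVec (g - (f + gbar)) i = 0 := by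
      intro i
      have hterm := (Finset.sum_eq_zero_iff_of_nonneg h2nn).mp hS2 i (Finset.mem_univ i)
      have := pow_eq_zero_iff (n := 2) (by norm_num) |>.mp hterm
      rw [hr i] at this
      linarith
    have hg : g = f + gbar := by
      have hXh : X.mulVec (g - (f + gbar)) = X.mulVec 0 := by
        funext i; rw [hw i, Matrix.mulVec_zero]; rfl
      have := hinj hXh
      have := sub_eq_zero.mp this
      exact this
    refine ⟨hg, ?_⟩
    funext i
    have := hr i
    rw [hg] at this
    have hyi := congrFun hyX i
    simp only [Pi.add_apply, Pi.sub_apply] at this hyi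
    linarith
end
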